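/- arXiv:math/0507089 — 3 statements merged into one kernel-verified Lean document; each statement's English description precedes it below -/
import Mathlib

section
/- On the unit circle S¹, the antipodal map a(x) = -x generates a group of order 2, and for the rotation group acting on directions, the induced transformation h_a is not the identity; consequently any rotation-equivariant directional functional has definability breakdown point at most 1/2 at every probability measure on S¹ (for any metric d satisfying d(αP+(1-α)Q, αP+(1-α)R) ≤ 1-α). -/
open MeasureTheory Metric
open scoped ENNReal NNReal

/-- The antipodal map on the unit circle `S¹ ⊂ ℝ²`. -/
noncomputable def antipode :
    sphere (0 : EuclideanSpace ℝ (Fin 2)) 1 → sphere (0 : EuclideanSpace ℝ (Fin 2)) 1 :=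
  fun x => ⟨-x.1, by
    rw [mem_sphere_zero_iff_norm, norm_neg, ← mem_sphere_zero_iff_norm]
    exact x.2⟩


lemma antipode_invol : ∀ x, antipode (antipode x) = x := by
  intro x; apply Subtype.ext; simp [antipode]

lemma antipode_cont : Continuous antipode :=
  Continuous.subtype_mk (continuous_subtype_val.neg) _

lemma antipode_meas : Measurable antipode := antipode_cont.measurable

lemma antipode_no_fix (x : sphere (0 : EuclideanSpace ℝ (Fin 2)) 1) : antipode x ≠ x := by
  intro h
  have h1 : -x.1 = x.1 := congrArg Subtype.val h
  have hx : x.1 = 0 := by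
    have h2 : x.1 + x.1 = 0 := neg_eq_iff_add_eq_zero.mp h1
    have h3 : (2:ℝ) • x.1 = 0 := by rw [two_smul]; exact h2
    rcases smul_eq_zero.mp h3 with h4 | h4
    · norm_num at h4
    · exact h4
  have hm := x.2
  rw [mem_sphere_zero_iff_norm, hx] at hm
  simp at hm

/-- On `S¹` the antipodal map generates a group of order 2 and is not
the identity; consequently any equivariant directional functional (equivariant in
particular under the antipodal map) has definability breakdown point at most `1/2`
at every probability measure on `S¹`, for any metric `d` with
`d(αP+(1-α)Q, αP+(1-α)R) ≤ 1-α`. -/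
theorem circle_breakdown_le_half
    (PT : Set (Measure (sphere (0 : EuclideanSpace ℝ (Fin 2)) 1)))
    (T : Measure (sphere (0 : EuclideanSpace ℝ (Fin 2)) 1) →
      sphere (0 : EuclideanSpace ℝ (Fin 2)) 1)
    (d : Measure (sphere (0 : EuclideanSpace ℝ (Fin 2)) 1) →
      Measure (sphere (0 : EuclideanSpace ℝ (Fin 2)) 1) → ℝ)
    (hd : ∀ P Q R, IsProbabilityMeasure P → IsProbabilityMeasure Q →
      IsProbabilityMeasure R → ∀ α : ℝ≥0, α ≤ 1 →
        d ((α : ℝ≥0∞) • P + (1 - (α : ℝ≥0∞)) • Q)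
          ((α : ℝ≥0∞) • P + (1 - (α : ℝ≥0∞)) • R) ≤ 1 - (α : ℝ))
    (hclosed : ∀ P ∈ PT, P.map antipode ∈ PT)
    (hequiv : ∀ P ∈ PT, T (P.map antipode) = antipode (T P))
    (P : Measure (sphere (0 : EuclideanSpace ℝ (Fin 2)) 1)) [IsProbabilityMeasure P] :
    (∀ x, antipode (antipode x) = x) ∧ antipode ≠ id ∧
      sInf {ε : ℝ | 0 < ε ∧ ∃ Q, Q ∉ PT ∧ d P Q < ε} ≤ 1 / 2 := by
  refine ⟨antipode_invol, ?_, ?_⟩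
  · intro h
    exact antipode_no_fix ⟨EuclideanSpace.single 0 1,
      by simp [mem_sphere_zero_iff_norm, EuclideanSpace.norm_single]⟩ (by rw [h]; rfl)
  · -- the symmetrized measure
    set Pa := P.map antipode with hPa
    have hPaP : IsProbabilityMeasure Pa := Measure.isProbabilityMeasure_map antipode_meas.aemeasurable
    set Q₀ : Measure (sphere (0 : EuclideanSpace ℝ (Fin 2)) 1) :=
      ((1/2 : ℝ≥0) : ℝ≥0∞) • P + (1 - ((1/2 : ℝ≥0) : ℝ≥0∞)) • Pa with hQ₀
    have hmapmap : Pa.map antipode = P := by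
      rw [hPa, Measure.map_map antipode_meas antipode_meas]
      have : antipode ∘ antipode = id := funext antipode_invol
      rw [this, Measure.map_id]
    have hhalf : (1 - ((1/2 : ℝ≥0) : ℝ≥0∞)) = ((1/2 : ℝ≥0) : ℝ≥0∞) := by
      norm_num
    have hQ₀map : Q₀.map antipode = Q₀ := by
      rw [hQ₀, Measure.map_add _ _ antipode_meas, Measure.map_smul, Measure.map_smul,
        ← hPa, hmapmap, hhalf, add_comm]
    have hQ₀notin : Q₀ ∉ PT := by
      intro hmem
      have := hequiv Q₀ hmem
      rw [hQ₀map] at this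
      exact antipode_no_fix (T Q₀) this.symm
    have hdist : d P Q₀ ≤ 1/2 := by
      have key := hd P P Pa ‹_› ‹_› hPaP (1/2) (by norm_num)
      have hPP : ((1/2 : ℝ≥0) : ℝ≥0∞) • P + (1 - ((1/2 : ℝ≥0) : ℝ≥0∞)) • P = P := by
        rw [hhalf, ← add_smul]
        norm_num
        rw [ENNReal.inv_two_add_inv_two, one_smul]
      rw [hPP] at key
      calc d P Q₀ ≤ 1 - ((1/2 : ℝ≥0) : ℝ) := key
        _ = 1/2 := by norm_num
    have hsub : Set.Ioi (1/2 : ℝ) ⊆ {ε : ℝ | 0 < ε ∧ ∃ Q, Q ∉ PT ∧ d P Q < ε} := by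
      intro ε hε
      exact ⟨lt_trans (by norm_num) hε, Q₀, hQ₀notin, lt_of_le_of_lt hdist hε⟩
    have hbdd : BddBelow {ε : ℝ | 0 < ε ∧ ∃ Q, Q ∉ PT ∧ d P Q < ε} :=
      ⟨0, fun x hx => le_of_lt hx.1⟩
    calc sInf {ε : ℝ | 0 < ε ∧ ∃ Q, Q ∉ PT ∧ d P Q < ε} ≤ sInf (Set.Ioi (1/2 : ℝ)) :=
          csInf_le_csInf hbdd (Set.nonempty_Ioi) hsub
      _ = 1/2 := csInf_Ioi
end

section
/- On the unit sphere S^{d-1} ⊂ ℝ^d (d ≥ 2), the antipodal map has order 2 and acts without fixed points; for any O(d)-equivariant functional T assigning directions in S^{d-1} to probability measures, the symmetrized measure (P + P^a)/2 lies outside the domain of T, and hence ε*(T,P,d_tv) ≤ 1/2 for every probability measure P. -/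
open MeasureTheory Metric
open scoped ENNReal NNReal

/-- The map on the unit sphere `S^{d-1} ⊂ ℝ^d` induced by a linear isometry
(an element of the orthogonal group `O(d)`). -/
noncomputable def sphereMap {n : ℕ}
    (O : EuclideanSpace ℝ (Fin n) ≃ₗᵢ[ℝ] EuclideanSpace ℝ (Fin n)) :
    sphere (0 : EuclideanSpace ℝ (Fin n)) 1 → sphere (0 : EuclideanSpace ℝ (Fin n)) 1 :=
  fun x => ⟨O x.1, by
    rw [mem_sphere_zero_iff_norm, O.norm_map, ← mem_sphere_zero_iff_norm]
    exact x.2⟩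

/-- The antipodal map on the unit sphere `S^{d-1} ⊂ ℝ^d`. -/
noncomputable def sphereAntipode (n : ℕ) :
    sphere (0 : EuclideanSpace ℝ (Fin n)) 1 → sphere (0 : EuclideanSpace ℝ (Fin n)) 1 :=
  sphereMap (LinearIsometryEquiv.neg ℝ)

/-- Total variation distance. -/
noncomputable def dtv {X : Type*} [MeasurableSpace X] (P Q : Measure X) : ℝ :=
  ⨆ B : {B : Set X // MeasurableSet B}, |(P B).toReal - (Q B).toReal|


lemma sphereMap_continuous {n : ℕ}
    (O : EuclideanSpace ℝ (Fin n) ≃ₗᵢ[ℝ] EuclideanSpace ℝ (Fin n)) :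
    Continuous (sphereMap O) :=
  Continuous.subtype_mk (O.continuous.comp continuous_subtype_val) _

lemma sphereMap_measurable {n : ℕ}
    (O : EuclideanSpace ℝ (Fin n) ≃ₗᵢ[ℝ] EuclideanSpace ℝ (Fin n)) :
    Measurable (sphereMap O) :=
  (sphereMap_continuous O).measurable

lemma sphereAntipode_invol {n : ℕ} (x : sphere (0 : EuclideanSpace ℝ (Fin n)) 1) :
    sphereAntipode n (sphereAntipode n x) = x := by
  simp [sphereAntipode, sphereMap]

lemma sphereAntipode_ne {n : ℕ} (x : sphere (0 : EuclideanSpace ℝ (Fin n)) 1) :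
    sphereAntipode n x ≠ x := by
  intro h
  have h1 : -x.1 = x.1 := congrArg Subtype.val h
  have hx0 : x.1 = 0 := by
    have h2 : x.1 + x.1 = 0 := by nth_rewrite 1 [← h1]; exact neg_add_cancel x.1
    have h3 : (2 : ℝ) • x.1 = 0 := by rw [two_smul]; exact h2
    simpa using h3
  have := x.2
  rw [mem_sphere_zero_iff_norm, hx0] at this
  simp at this

/-- On `S^{d-1}` (`d ≥ 2`) the antipodal map has order 2 and no fixed
points; for any `O(d)`-equivariant directional functional `T`, the symmetrized
measure `(P + P^a)/2` lies outside the domain of `T`, hence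
`ε*(T,P,d_tv) ≤ 1/2` for every probability measure `P`. -/
theorem sphere_breakdown_le_half
    (n : ℕ) (hn : 2 ≤ n)
    (PT : Set (Measure (sphere (0 : EuclideanSpace ℝ (Fin n)) 1)))
    (T : Measure (sphere (0 : EuclideanSpace ℝ (Fin n)) 1) →
      sphere (0 : EuclideanSpace ℝ (Fin n)) 1)
    (hclosed : ∀ P ∈ PT,
      ∀ O : EuclideanSpace ℝ (Fin n) ≃ₗᵢ[ℝ] EuclideanSpace ℝ (Fin n),
        P.map (sphereMap O) ∈ PT)
    (hequiv : ∀ P ∈ PT,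
      ∀ O : EuclideanSpace ℝ (Fin n) ≃ₗᵢ[ℝ] EuclideanSpace ℝ (Fin n),
        T (P.map (sphereMap O)) = sphereMap O (T P))
    (P : Measure (sphere (0 : EuclideanSpace ℝ (Fin n)) 1)) [IsProbabilityMeasure P] :
    (∀ x, sphereAntipode n (sphereAntipode n x) = x) ∧
    (∀ x, sphereAntipode n x ≠ x) ∧
    ((2 : ℝ≥0∞)⁻¹ • P + (2 : ℝ≥0∞)⁻¹ • P.map (sphereAntipode n)) ∉ PT ∧
    sInf {ε : ℝ | 0 < ε ∧ ∃ Q, Q ∉ PT ∧ dtv P Q < ε} ≤ 1 / 2 := by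
  classical
  set a := sphereAntipode n with ha
  have hameas : Measurable a := sphereMap_measurable _
  have haa : a ∘ a = id := funext fun x => sphereAntipode_invol x
  set P' := P.map a with hP'
  haveI : IsProbabilityMeasure P' := Measure.isProbabilityMeasure_map hameas.aemeasurable
  set Q : Measure (sphere (0 : EuclideanSpace ℝ (Fin n)) 1) :=
    (2 : ℝ≥0∞)⁻¹ • P + (2 : ℝ≥0∞)⁻¹ • P' with hQdef
  have hQmap : Q.map a = Q := by
    rw [hQdef, Measure.map_add _ _ hameas, Measure.map_smul, Measure.map_smul,
      hP', Measure.map_map hameas hameas, haa, Measure.map_id]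
    exact add_comm _ _
  have hQnot : Q ∉ PT := by
    intro hQ
    have := hequiv Q hQ (LinearIsometryEquiv.neg ℝ)
    rw [show sphereMap (LinearIsometryEquiv.neg ℝ) = a from rfl, hQmap] at this
    exact sphereAntipode_ne (T Q) this.symm
  refine ⟨sphereAntipode_invol, sphereAntipode_ne, hQnot, ?_⟩
  -- dtv bound
  have hdtv : dtv P Q ≤ 1 / 2 := by
    apply Real.iSup_le _ (by norm_num)
    rintro ⟨B, hB⟩
    have h1 : P B ≤ 1 := prob_le_one
    have h2 : P' B ≤ 1 := prob_le_one
    have hQB : Q B = 2⁻¹ * P B + 2⁻¹ * P' B := by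
      rw [hQdef]; simp [Measure.add_apply, Measure.smul_apply]
    have hPfin : P B ≠ ⊤ := (lt_of_le_of_lt h1 (by norm_num)).ne
    have hP'fin : P' B ≠ ⊤ := (lt_of_le_of_lt h2 (by norm_num)).ne
    have hQtoReal : (Q B).toReal = 2⁻¹ * (P B).toReal + 2⁻¹ * (P' B).toReal := by
      rw [hQB, ENNReal.toReal_add, ENNReal.toReal_mul, ENNReal.toReal_mul]
      · norm_num
      · exact ENNReal.mul_ne_top (by norm_num) hPfin
      · exact ENNReal.mul_ne_top (by norm_num) hP'fin
    have hp1 : (P B).toReal ≤ 1 := by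
      simpa using ENNReal.toReal_mono (by norm_num) h1
    have hp2 : (P' B).toReal ≤ 1 := by
      simpa using ENNReal.toReal_mono (by norm_num) h2
    have hp3 : 0 ≤ (P B).toReal := ENNReal.toReal_nonneg
    have hp4 : 0 ≤ (P' B).toReal := ENNReal.toReal_nonneg
    rw [hQtoReal]
    rw [abs_le]
    constructor <;> [skip; skip] <;> linarith
  have hmem : ∀ ε : ℝ, 1/2 < ε → ε ∈ {ε : ℝ | 0 < ε ∧ ∃ Q, Q ∉ PT ∧ dtv P Q < ε} := by
    intro ε hε
    exact ⟨by linarith, Q, hQnot, lt_of_le_of_lt hdtv hε⟩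
  have hbdd : BddBelow {ε : ℝ | 0 < ε ∧ ∃ Q, Q ∉ PT ∧ dtv P Q < ε} :=
    ⟨0, fun x hx => hx.1.le⟩
  by_contra hcon
  push_neg at hcon
  have h1 : (1/2 + (sInf {ε : ℝ | 0 < ε ∧ ∃ Q, Q ∉ PT ∧ dtv P Q < ε}))/2 ∈
      {ε : ℝ | 0 < ε ∧ ∃ Q, Q ∉ PT ∧ dtv P Q < ε} := hmem _ (by linarith)
  have := csInf_le hbdd h1
  linarith
end

section
/- If P is a probability measure on S¹ with d_tv(P, U) < 1/2 − δ for the uniform measure U, then the definability breakdown point (with respect to d_tv) of any rotation-equivariant directional functional at P is strictly less than 1/2 − δ; in particular, breakdown points are small at measures close to uniform. -/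
open MeasureTheory
open scoped ENNReal NNReal

/-- The uniform (normalized Haar) probability measure on the circle,
modelled as `AddCircle (2π)`. -/
noncomputable def uniformCircle : Measure (AddCircle (2 * Real.pi)) :=
  @AddCircle.haarAddCircle (2 * Real.pi) ⟨by positivity⟩

/-- If `P` is a probability measure on the circle with
`d_tv(P,U) < 1/2 - δ`, then the total-variation definability breakdown point of any
rotation-equivariant directional functional at `P` is strictly less than `1/2 - δ`:
breakdown points are small at measures close to uniform. -/
theorem breakdown_small_near_uniform
    (PT : Set (Measure (AddCircle (2 * Real.pi))))
    (T : Measure (AddCircle (2 * Real.pi)) → AddCircle (2 * Real.pi))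
    (hclosed : ∀ P ∈ PT, ∀ c : AddCircle (2 * Real.pi), P.map (· + c) ∈ PT)
    (hequiv : ∀ P ∈ PT, ∀ c : AddCircle (2 * Real.pi), T (P.map (· + c)) = T P + c)
    (δ : ℝ) (hδ : 0 ≤ δ)
    (P : Measure (AddCircle (2 * Real.pi))) [IsProbabilityMeasure P]
    (hP : dtv P uniformCircle < 1 / 2 - δ) :
    sInf {ε : ℝ | 0 < ε ∧ ∃ Q, Q ∉ PT ∧ dtv P Q < ε} < 1 / 2 - δ := by
  -- U is not in the domain PT
  have hU : uniformCircle ∉ PT := by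
    intro hmem
    have hpos : (0 : ℝ) < 2 * Real.pi := by positivity
    haveI : Fact ((0:ℝ) < 2 * Real.pi) := ⟨hpos⟩
    set c : AddCircle (2 * Real.pi) := ((Real.pi : ℝ) : AddCircle (2 * Real.pi)) with hcdef
    have hc : c ≠ 0 := by
      rw [hcdef]
      intro h
      rw [AddCircle.coe_eq_zero_iff] at h
      obtain ⟨n, hn⟩ := h
      have hpi := Real.pi_pos
      rcases lt_trichotomy n 0 with h | h | h
      · have : (n : ℝ) * (2 * Real.pi) < 0 :=
          mul_neg_of_neg_of_pos (by exact_mod_cast h) hpos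
        rw [zsmul_eq_mul] at hn; linarith
      · simp [h] at hn; linarith
      · have h1 : (1 : ℝ) ≤ (n : ℝ) := by exact_mod_cast h
        have : (2 * Real.pi) ≤ (n : ℝ) * (2 * Real.pi) :=
          le_mul_of_one_le_left (le_of_lt hpos) h1
        rw [zsmul_eq_mul] at hn; linarith
    have hinv : uniformCircle.map (· + c) = uniformCircle := by
      have : (fun x : AddCircle (2 * Real.pi) => x + c) = (fun x => c + x) := by
        funext x; exact add_comm x c
      rw [this]
      haveI : uniformCircle.IsAddLeftInvariant := by
        unfold uniformCircle; infer_instance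
      exact map_add_left_eq_self uniformCircle c
    have := hequiv uniformCircle hmem c
    rw [hinv] at this
    exact hc (left_eq_add.mp this)
  have h0 : (0:ℝ) ≤ dtv P uniformCircle :=
    Real.iSup_nonneg fun B => abs_nonneg _
  set a := dtv P uniformCircle with ha
  set ε := (a + (1/2 - δ)) / 2 with hε
  have haε : a < ε := by rw [hε]; linarith
  have hεb : ε < 1/2 - δ := by rw [hε]; linarith
  have hεpos : 0 < ε := lt_of_le_of_lt h0 haε
  have hmemε : ε ∈ {ε : ℝ | 0 < ε ∧ ∃ Q, Q ∉ PT ∧ dtv P Q < ε} :=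
    ⟨hεpos, uniformCircle, hU, haε⟩
  have hbdd : BddBelow {ε : ℝ | 0 < ε ∧ ∃ Q, Q ∉ PT ∧ dtv P Q < ε} :=
    ⟨0, fun x hx => le_of_lt hx.1⟩
  exact lt_of_le_of_lt (csInf_le hbdd hmemε) hεb
end
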